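/- arXiv:1604.08473 — 2 statements merged into one kernel-verified Lean document; each statement's English description precedes it below -/
import Mathlib

section
/- Let E be a real Banach space and let K be a subset of E that is compact and metrizable in the weak topology of E. Let f : K → ℝ ∪ {+∞} be proper and lower semicontinuous with respect to the weak topology on K. Then the set N(f) = {x* ∈ E* : the function x ↦ f(x) − x*(x) does not attain a strict minimum on K} is meagre (of the first Baire category) in the dual Banach space E*. -/
/-!
Fix `x ∈ E*` and tilt `f` by `g + t x`. Comparing the two minimality inequalities shows that if
`p` minimizes `f - (g + t x)` and `q` minimizes `f - (g + s x)` with `t < s`, then `x p ≤ x q`.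
So the open intervals spanned by the values of `x` on the minimizers are pairwise disjoint in `t`,
and for all but countably many `t` the functional `x` is constant on the minimizers of
`f - (g + t x)`. The functionals for which `x` takes two values at least `1/n` apart on the
minimizers therefore form a set with dense complement; it is closed because weakly compact sets
are norm bounded, which makes `(g, p) ↦ g p` jointly continuous on `E* × K`, and because the
projection along the compact factor `K × K` is closed. Finally, countably many functionals
already separate the points of the compact metrizable `K`.
-/

open Filter Topology Set Function

section Semicontinuity

variable {Z : Type*} [TopologicalSpace Z]

lemma LowerSemicontinuous.sub_coe {f : Z → EReal} (hf : LowerSemicontinuous f) {φ : Z → ℝ}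
    (hφ : Continuous φ) : LowerSemicontinuous fun z => f z - φ z := by
  simp_rw [sub_eq_add_neg, ← EReal.coe_neg]
  exact hf.add' (continuous_coe_real_ereal.comp hφ.neg).lowerSemicontinuous
    fun z => EReal.continuousAt_add (Or.inr (EReal.coe_ne_bot _)) (Or.inr (EReal.coe_ne_top _))

lemma LowerSemicontinuous.isClosed_setOf_le {γ : Type*} [LinearOrder γ] [TopologicalSpace γ]
    [ClosedIciTopology γ] {F G : Z → γ} (hF : LowerSemicontinuous F) (hG : Continuous G) :
    IsClosed {z | F z ≤ G z} :=
  hF.isClosed_epigraph.preimage (continuous_id.prodMk hG)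

end Semicontinuity

section Minimizers

variable {X : Type*}

def minimizers (f : X → EReal) (u : X → ℝ) : Set X := {p | ∀ q, f p - u p ≤ f q - u q}

variable {f : X → EReal}

lemma ne_top_of_mem_minimizers (hproper : ∃ q, f q ≠ ⊤) {u : X → ℝ} {p : X}
    (hp : p ∈ minimizers f u) : f p ≠ ⊤ := by
  obtain ⟨q, hq⟩ := hproper
  refine fun htop => hq (top_le_iff.mp ?_)
  have h := EReal.add_le_of_le_sub (hp q)
  rwa [htop, EReal.top_sub_coe, EReal.top_add_coe] at h

lemma le_of_mem_minimizers_add_smul (hbot : ∀ p, f p ≠ ⊥) (hproper : ∃ q, f q ≠ ⊤)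
    {u v : X → ℝ} {t s : ℝ} (hts : t < s) {p q : X} (hp : p ∈ minimizers f (u + t • v))
    (hq : q ∈ minimizers f (u + s • v)) : v p ≤ v q := by
  have hpq := hp q
  have hqp := hq p
  lift f p to ℝ using ⟨ne_top_of_mem_minimizers hproper hp, hbot p⟩ with a
  lift f q to ℝ using ⟨ne_top_of_mem_minimizers hproper hq, hbot q⟩ with b
  simp only [Pi.add_apply, Pi.smul_apply, smul_eq_mul, ← EReal.coe_sub,
    EReal.coe_le_coe_iff] at hpq hqp
  -- the sum of the two inequalities is `(s - t) * (v q - v p) ≥ 0`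
  nlinarith

lemma countable_setOf_ne_on_minimizers (hbot : ∀ p, f p ≠ ⊥) (hproper : ∃ q, f q ≠ ⊤)
    (u v : X → ℝ) :
    {t : ℝ | ∃ p ∈ minimizers f (u + t • v), ∃ q ∈ minimizers f (u + t • v),
      v p ≠ v q}.Countable := by
  set gap : ℝ → Set ℝ := fun t =>
    ⋃ p ∈ minimizers f (u + t • v), ⋃ q ∈ minimizers f (u + t • v), Ioo (v p) (v q)
  have hdisj : Pairwise (Disjoint on gap) := by
    refine (pairwise_disjoint_on gap).mpr fun t s hts => disjoint_left.mpr ?_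
    simp only [gap, mem_iUnion, mem_Ioo]
    rintro r ⟨p, hp, q, hq, -, hrq⟩ ⟨p', hp', q', hq', hpr', -⟩
    linarith [le_of_mem_minimizers_add_smul hbot hproper hts hq hp']
  refine (PairwiseDisjoint.countable_of_isOpen (hdisj.set_pairwise {t | (gap t).Nonempty})
    (fun t _ => isOpen_biUnion fun _ _ => isOpen_biUnion fun _ _ => isOpen_Ioo)
    fun t ht => ht).mono ?_
  rintro t ⟨p, hp, q, hq, hne⟩
  simp only [gap, Set.Nonempty, mem_iUnion, mem_Ioo]
  rcases hne.lt_or_gt with h | h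
  · obtain ⟨r, hr⟩ := exists_between h
    exact ⟨r, p, hp, q, hq, hr⟩
  · obtain ⟨r, hr⟩ := exists_between h
    exact ⟨r, q, hq, p, hp, hr⟩

variable [TopologicalSpace X]

lemma minimizers_nonempty [CompactSpace X] (hf : LowerSemicontinuous f)
    (hproper : ∃ q, f q ≠ ⊤) {u : X → ℝ} (hu : Continuous u) : (minimizers f u).Nonempty := by
  obtain ⟨q, -⟩ := hproper
  obtain ⟨p, -, hp⟩ := ((hf.sub_coe hu).lowerSemicontinuousOn univ).exists_isMinOn
    ⟨q, mem_univ q⟩ isCompact_univ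
  exact ⟨p, fun q => hp (mem_univ q)⟩

lemma isClosed_setOf_mem_minimizers {Y : Type*} [TopologicalSpace Y]
    (hf : LowerSemicontinuous f) {u : Y → X → ℝ} (hu : Continuous (uncurry u)) :
    IsClosed {z : Y × X | z.2 ∈ minimizers f (u z.1)} := by
  simp only [minimizers, mem_iInter, ofPred_forall]
  refine isClosed_iInter fun q => ?_
  have hF : LowerSemicontinuous fun z : Y × X => f z.2 - u z.1 z.2 :=
    (hf.comp continuous_snd).sub_coe hu
  induction f q using EReal.rec with
  | bot => simp only [EReal.bot_sub]; exact hF.isClosed_preimage ⊥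
  | coe b =>
    simp only [← EReal.coe_sub]
    exact hF.isClosed_setOf_le (continuous_coe_real_ereal.comp
      (continuous_const.sub (hu.comp (continuous_fst.prodMk continuous_const))))
  | top => simp

lemma isClosed_setOf_le_abs_sub_on_minimizers [CompactSpace X] {Y : Type*}
    [TopologicalSpace Y] (hf : LowerSemicontinuous f) {u : Y → X → ℝ} (hu : Continuous (uncurry u))
    {v : X → ℝ} (hv : Continuous v) (ε : ℝ) :
    IsClosed {y | ∃ p ∈ minimizers f (u y), ∃ q ∈ minimizers f (u y), ε ≤ |v p - v q|} := by
  set M := {z : Y × X | z.2 ∈ minimizers f (u z.1)}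
  have hM : IsClosed M := isClosed_setOf_mem_minimizers hf hu
  have hC : IsClosed
      {z : Y × X × X | (z.1, z.2.1) ∈ M ∧ (z.1, z.2.2) ∈ M ∧ ε ≤ |v z.2.1 - v z.2.2|} :=
    (hM.preimage (continuous_fst.prodMk (continuous_fst.comp continuous_snd))).inter
      ((hM.preimage (continuous_fst.prodMk (continuous_snd.comp continuous_snd))).inter
        (isClosed_le continuous_const (((hv.comp (continuous_fst.comp continuous_snd)).sub
          (hv.comp (continuous_snd.comp continuous_snd))).abs)))
  convert isClosedMap_fst_of_compactSpace _ hC using 1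
  ext y
  simp [M]

end Minimizers

lemma exists_countable_separating_of_continuous {X : Type*} [TopologicalSpace X]
    [SecondCountableTopology X] {ι Z : Type*} [TopologicalSpace Z] [T2Space Z]
    (φ : ι → X → Z) (hφ : ∀ i, Continuous (φ i)) (hsep : ∀ p q, p ≠ q → ∃ i, φ i p ≠ φ i q) :
    ∃ T : Set ι, T.Countable ∧ ∀ p q, p ≠ q → ∃ i ∈ T, φ i p ≠ φ i q := by
  obtain ⟨T, hT, hcover⟩ := TopologicalSpace.isOpen_iUnion_countable
    (fun i => {z : X × X | φ i z.1 ≠ φ i z.2})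
    fun i => isOpen_ne_fun ((hφ i).comp continuous_fst) ((hφ i).comp continuous_snd)
  refine ⟨T, hT, fun p q hpq => ?_⟩
  obtain ⟨i, hi⟩ := hsep p q hpq
  have : (p, q) ∈ ⋃ i ∈ T, {z : X × X | φ i z.1 ≠ φ i z.2} := hcover ▸ mem_iUnion.mpr ⟨i, hi⟩
  simpa using this

section LinearFamily

variable {X Y : Type*} [AddCommGroup Y] [Module ℝ Y] [TopologicalSpace Y]
  [ContinuousAdd Y] [ContinuousSMul ℝ Y] {f : X → EReal} {u : Y →ₗ[ℝ] X → ℝ}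

lemma dense_compl_setOf_ne_on_minimizers (hbot : ∀ p, f p ≠ ⊥) (hproper : ∃ q, f q ≠ ⊤)
    (x : Y) :
    Dense {y | ∃ p ∈ minimizers f (u y), ∃ q ∈ minimizers f (u y), u x p ≠ u x q}ᶜ := by
  set B := {y | ∃ p ∈ minimizers f (u y), ∃ q ∈ minimizers f (u y), u x p ≠ u x q}
  intro y
  have hS : {t : ℝ | y + t • x ∈ B}.Countable := by
    simpa only [B, mem_ofPred_eq, map_add, map_smul] using
      countable_setOf_ne_on_minimizers hbot hproper (u y) (u x)
  have h0 : (0 : ℝ) ∈ closure {t : ℝ | y + t • x ∈ B}ᶜ := by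
    rw [(hS.dense_compl ℝ).closure_eq]
    exact mem_univ 0
  have hline : Continuous fun t : ℝ => y + t • x :=
    continuous_const.add (continuous_id.smul continuous_const)
  simpa using map_mem_closure (t := Bᶜ) hline h0 fun t ht => ht

variable [TopologicalSpace X] [CompactSpace X]

lemma isMeagre_setOf_ne_on_minimizers (hf : LowerSemicontinuous f) (hbot : ∀ p, f p ≠ ⊥)
    (hproper : ∃ q, f q ≠ ⊤) (hu : Continuous (uncurry fun y => u y)) (x : Y) :
    IsMeagre {y | ∃ p ∈ minimizers f (u y), ∃ q ∈ minimizers f (u y), u x p ≠ u x q} := by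
  set A : ℕ → Set Y := fun n =>
    {y | ∃ p ∈ minimizers f (u y), ∃ q ∈ minimizers f (u y), 1 / (n + 1 : ℝ) ≤ |u x p - u x q|}
  have hA : ∀ n, IsNowhereDense (A n) := by
    intro n
    have hclosed : IsClosed (A n) := isClosed_setOf_le_abs_sub_on_minimizers hf hu
      (hu.comp (continuous_const.prodMk continuous_id)) _
    refine hclosed.isNowhereDense_iff.mpr (interior_eq_empty_iff_dense_compl.mpr ?_)
    refine (dense_compl_setOf_ne_on_minimizers (u := u) hbot hproper x).mono
      (compl_subset_compl.mpr ?_)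
    rintro y ⟨p, hp, q, hq, hpq⟩
    refine ⟨p, hp, q, hq, fun h => ?_⟩
    rw [h, sub_self, abs_zero] at hpq
    linarith [Nat.one_div_pos_of_nat (α := ℝ) (n := n)]
  refine (isMeagre_iUnion fun n => (hA n).isMeagre).mono ?_
  rintro y ⟨p, hp, q, hq, hpq⟩
  obtain ⟨n, hn⟩ := exists_nat_one_div_lt (abs_pos.mpr (sub_ne_zero.mpr hpq))
  exact mem_iUnion.mpr ⟨n, p, hp, q, hq, hn.le⟩

theorem isMeagre_setOf_not_exists_strict_min [SecondCountableTopology X]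
    (hf : LowerSemicontinuous f) (hbot : ∀ p, f p ≠ ⊥) (hproper : ∃ q, f q ≠ ⊤)
    (hu : Continuous (uncurry fun y => u y)) (hsep : ∀ p q : X, p ≠ q → ∃ y, u y p ≠ u y q) :
    IsMeagre {y | ¬ ∃ p₀, ∀ p, p ≠ p₀ → f p₀ - u y p₀ < f p - u y p} := by
  have hcont : ∀ y, Continuous (u y) := fun y => hu.comp (continuous_const.prodMk continuous_id)
  obtain ⟨T, hT, hTsep⟩ := exists_countable_separating_of_continuous (fun y => u y) hcont hsep
  refine (isMeagre_biUnion hT fun x _ =>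
    isMeagre_setOf_ne_on_minimizers hf hbot hproper hu x).mono fun y hy => ?_
  obtain ⟨p₀, hp₀⟩ := minimizers_nonempty hf hproper (hcont y)
  push Not at hy
  obtain ⟨p, hne, hle⟩ := hy p₀
  obtain ⟨x, hxT, hx⟩ := hTsep p p₀ hne
  exact mem_iUnion₂.mpr ⟨x, hxT, p, fun q => hle.trans (hp₀ q), p₀, hp₀, hx⟩

end LinearFamily

section WeakSpace

variable {E : Type*} [NormedAddCommGroup E] [NormedSpace ℝ E]

def dualRestrict (K : Set (WeakSpace ℝ E)) : (E →L[ℝ] ℝ) →ₗ[ℝ] K → ℝ where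
  toFun g p := g (p : WeakSpace ℝ E)
  map_add' _ _ := rfl
  map_smul' _ _ := rfl

lemma continuous_dual_apply_weakSpace (g : E →L[ℝ] ℝ) :
    Continuous fun x : WeakSpace ℝ E => g x :=
  WeakBilin.eval_continuous _ g

variable {K : Set (WeakSpace ℝ E)}

lemma exists_norm_le_of_isCompact (hK : IsCompact K) :
    ∃ C, ∀ x ∈ K, ‖(toWeakSpace ℝ E).symm x‖ ≤ C := by
  set ι := NormedSpace.inclusionInDoubleDualLi (E := E) ℝ
  obtain ⟨C, hC⟩ := banach_steinhaus (g := fun p : K => ι ((toWeakSpace ℝ E).symm p)) fun g => by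
    obtain ⟨C, hC⟩ := (hK.image (continuous_dual_apply_weakSpace g)).isBounded.exists_norm_le
    exact ⟨C, fun p => hC _ ⟨p, p.2, rfl⟩⟩
  exact ⟨C, fun x hx => ι.norm_map _ ▸ hC ⟨x, hx⟩⟩

lemma continuous_uncurry_dualRestrict (hK : IsCompact K) :
    Continuous (uncurry fun g => dualRestrict K g) := by
  obtain ⟨C, hC⟩ := exists_norm_le_of_isCompact hK
  rw [continuous_iff_continuousAt]
  rintro ⟨G, P⟩
  have hsmall : Tendsto (fun z : (E →L[ℝ] ℝ) × K =>
      z.1 (z.2 : WeakSpace ℝ E) - G (z.2 : WeakSpace ℝ E))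
      (𝓝 (G, P)) (𝓝 0) := by
    refine squeeze_zero_norm (fun z =>
      ((z.1 - G).le_opNorm ((toWeakSpace ℝ E).symm z.2)).trans
        (mul_le_mul_of_nonneg_left (hC _ z.2.2) (norm_nonneg _))) ?_
    simpa using (tendsto_iff_norm_sub_tendsto_zero.mp
      (continuous_fst.tendsto (G, P))).mul_const C
  have hG : Tendsto (fun z : (E →L[ℝ] ℝ) × K => G (z.2 : WeakSpace ℝ E)) (𝓝 (G, P))
      (𝓝 (G (P : WeakSpace ℝ E))) :=
    ((continuous_dual_apply_weakSpace G).comp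
      (continuous_subtype_val.comp continuous_snd)).tendsto _
  have h := hsmall.add hG
  simp only [sub_add_cancel, zero_add] at h
  exact h

lemma dualRestrict_separatesPoints (p q : K) (h : p ≠ q) :
    ∃ g, dualRestrict K g p ≠ dualRestrict K g q :=
  SeparatingDual.exists_separating_of_ne (R := ℝ)
    (x := (toWeakSpace ℝ E).symm p) (y := (toWeakSpace ℝ E).symm q)
    (by simpa [Subtype.ext_iff] using h)

end WeakSpace

theorem stmt_5_general {E : Type*} [NormedAddCommGroup E] [NormedSpace ℝ E]
    (K : Set (WeakSpace ℝ E)) (hcomp : IsCompact K)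
    (hmetr : TopologicalSpace.MetrizableSpace K)
    (f : K → EReal) (hproper : ∃ p, f p ≠ ⊤) (hreal : ∀ p, f p ≠ ⊥)
    (hlsc : LowerSemicontinuous f) :
    IsMeagre {g : E →L[ℝ] ℝ | ¬ ∃ p₀ : K, ∀ p : K, p ≠ p₀ →
      f p₀ - (g (p₀ : WeakSpace ℝ E) : ℝ) < f p - (g (p : WeakSpace ℝ E) : ℝ)} := by
  have : CompactSpace K := isCompact_iff_compactSpace.mp hcomp
  exact isMeagre_setOf_not_exists_strict_min (u := dualRestrict K) hlsc hreal hproper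
    (continuous_uncurry_dualRestrict hcomp) dualRestrict_separatesPoints

/-- **Linear variational principle for weakly compact sets.** Let `E` be a real Banach space
and `K` a weakly compact, weakly metrizable subset of `E`. Let `f : K → ℝ ∪ {+∞}` be proper
and lower semicontinuous (for the weak topology). Then the set of `x* ∈ E*` such that
`x ↦ f(x) - x*(x)` does not attain a strict minimum on `K` is meagre in `E*`. -/
theorem stmt_5 {E : Type*} [NormedAddCommGroup E] [NormedSpace ℝ E] [CompleteSpace E]
    (K : Set (WeakSpace ℝ E)) (hcomp : IsCompact K)
    (hmetr : TopologicalSpace.MetrizableSpace K)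
    (f : K → EReal) (hproper : ∃ p, f p ≠ ⊤) (hreal : ∀ p, f p ≠ ⊥)
    (hlsc : LowerSemicontinuous f) :
    IsMeagre {g : E →L[ℝ] ℝ | ¬ ∃ p₀ : K, ∀ p : K, p ≠ p₀ →
      f p₀ - (g (p₀ : WeakSpace ℝ E) : ℝ) < f p - (g (p : WeakSpace ℝ E) : ℝ)} :=
  stmt_5_general K hcomp hmetr f hproper hreal hlsc
end

section
/- Let E be a real Banach space and let K be a convex subset of E* that is compact and metrizable in the weak* topology. Then the weak* exposed points of K are weak* dense in the affine exposed points of K, which are weak* dense in the extreme points of K; that is, AExp(K) is contained in the weak* closure of w*Exp(K), and Ext(K) is contained in the weak* closure of AExp(K). -/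
/-!
Weak* exposed points are affinely exposed (by evaluation) and affinely exposed points are
extreme, so everything reduces to showing that each extreme point `e` of `K` is a weak* limit of
weak* exposed points.

Since `K` is compact and metrizable, countably many `yₙ ∈ E` with `‖yₙ‖ ≤ 2⁻ⁿ` and
`|q yₙ| ≤ 2⁻ⁿ` on `K` separate the points of `K`. Then `T q = (q yₙ)ₙ` maps `K` affinely and
homeomorphically into `ℓ²`, and every functional `⟪T ·, w⟫` is evaluation at `∑ wₙ yₙ ∈ E`.
In a Hilbert space a point `k` of a compact convex set `C` farthest from a point `z` is exposed
by `k - z`. Given a neighbourhood `U` of `e`, Milman's argument gives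
`e ∉ closedConvexHull (C \ U)`; moving `z` far out along the ray from `e` through its nearest
point in that hull makes all of `C \ U` closer to `z` than `e` is, so the farthest point from `z`
lies in `U`.
-/

open Set Filter Topology
open scoped lp

section ConvexHull

variable {E : Type*} [AddCommGroup E] [Module ℝ E] [TopologicalSpace E] [ContinuousAdd E]
  [ContinuousSMul ℝ E]

theorem IsCompact.convexJoin {s t : Set E} (hs : IsCompact s) (ht : IsCompact t) :
    IsCompact (_root_.convexJoin ℝ s t) := by
  have : _root_.convexJoin ℝ s t =
      (fun q : ℝ × E × E => (1 - q.1) • q.2.1 + q.1 • q.2.2) '' (Icc 0 1 ×ˢ s ×ˢ t) := by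
    ext x
    simp only [mem_convexJoin, segment_eq_image, mem_image, mem_prod, Prod.exists]
    constructor
    · rintro ⟨a, ha, b, hb, θ, hθ, rfl⟩
      exact ⟨θ, a, b, ⟨hθ, ha, hb⟩, rfl⟩
    · rintro ⟨θ, a, b, ⟨hθ, ha, hb⟩, rfl⟩
      exact ⟨a, ha, b, hb, θ, hθ, rfl⟩
  rw [this]
  exact (isCompact_Icc.prod (hs.prod ht)).image (by fun_prop)

theorem IsCompact.convexHull_union {s t : Set E} (hs : IsCompact s) (ht : IsCompact t)
    (hsc : Convex ℝ s) (htc : Convex ℝ t) : IsCompact (convexHull ℝ (s ∪ t)) := by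
  rcases s.eq_empty_or_nonempty with rfl | hs₀
  · simpa [htc.convexHull_eq] using ht
  rcases t.eq_empty_or_nonempty with rfl | ht₀
  · simpa [hsc.convexHull_eq] using hs
  rw [hsc.convexHull_union htc hs₀ ht₀]
  exact hs.convexJoin ht

theorem Set.Finite.isCompact_convexHull_biUnion {ι : Type*} {I : Set ι} (hI : I.Finite)
    {C : ι → Set E} (hC : ∀ i ∈ I, IsCompact (C i)) (hCc : ∀ i ∈ I, Convex ℝ (C i)) :
    IsCompact (convexHull ℝ (⋃ i ∈ I, C i)) := by
  induction I, hI using Set.Finite.induction_on with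
  | empty => simp
  | @insert a I _ _ ih =>
    rw [biUnion_insert, ← convexHull_convexHull_union_right]
    exact (hC a (mem_insert a I)).convexHull_union
      (ih (fun i hi => hC i (mem_insert_of_mem a hi)) (fun i hi => hCc i (mem_insert_of_mem a hi)))
      (hCc a (mem_insert a I)) (convex_convexHull ℝ _)

end ConvexHull

theorem mem_extremePoints_image_of_injOn {𝕜 V W : Type*} [Field 𝕜] [LinearOrder 𝕜]
    [IsStrictOrderedRing 𝕜] [AddCommGroup V] [Module 𝕜 V] [AddCommGroup W] [Module 𝕜 W]
    {K : Set V} (hK : Convex 𝕜 K) (f : V →ₗ[𝕜] W) (hf : InjOn f K) {e : V}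
    (he : e ∈ extremePoints 𝕜 K) : f e ∈ extremePoints 𝕜 (f '' K) := by
  refine ⟨mem_image_of_mem f he.1, ?_⟩
  rintro _ ⟨a, ha, rfl⟩ _ ⟨b, hb, rfl⟩ hab
  obtain ⟨c, hc, hce⟩ := (image_openSegment 𝕜 f.toAffineMap a b).symm.subset hab
  obtain rfl := hf (hK.openSegment_subset ha hb hc) he.1 hce
  exact congrArg f (he.2 ha hb hc)

theorem mem_extremePoints_of_affine_of_forall_lt {V : Type*} [AddCommGroup V] [Module ℝ V]
    {K : Set V} {p : V} (hp : p ∈ K) (τ : K → ℝ)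
    (hτ : ∀ (a b : V) (ha : a ∈ K) (hb : b ∈ K) (l : ℝ), 0 ≤ l → l ≤ 1 →
      ∀ hm : l • a + (1 - l) • b ∈ K,
        τ ⟨l • a + (1 - l) • b, hm⟩ = l * τ ⟨a, ha⟩ + (1 - l) * τ ⟨b, hb⟩)
    (hmax : ∀ q (hq : q ∈ K), q ≠ p → τ ⟨q, hq⟩ < τ ⟨p, hp⟩) : p ∈ extremePoints ℝ K := by
  have hle : ∀ q (hq : q ∈ K), τ ⟨q, hq⟩ ≤ τ ⟨p, hp⟩ := fun q hq => by
    rcases eq_or_ne q p with rfl | hqp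
    · exact le_rfl
    · exact (hmax q hq hqp).le
  refine ⟨hp, fun x₁ hx₁ x₂ hx₂ ⟨a, b, ha, hb, hab, hx⟩ => by_contra fun hx₁p => ?_⟩
  obtain rfl : b = 1 - a := by linarith
  have hτp := hτ x₁ x₂ hx₁ hx₂ a ha.le (by linarith) (hx ▸ hp)
  simp only [hx] at hτp
  nlinarith [hmax x₁ hx₁ hx₁p, hle x₂ hx₂]

section Normed

variable {E : Type*} [NormedAddCommGroup E] [NormedSpace ℝ E]

theorem notMem_closedConvexHull_of_mem_extremePoints {C S : Set E} {e : E}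
    (hC : IsCompact C) (hCc : Convex ℝ C) (hS : IsCompact S) (hSC : S ⊆ C)
    (he : e ∈ extremePoints ℝ C) (heS : e ∉ S) : e ∉ closedConvexHull ℝ S := by
  obtain ⟨r, hr, hrS⟩ := Metric.isOpen_iff.1 hS.isClosed.isOpen_compl e heS
  obtain ⟨I, hIS, hI, hSI⟩ := hS.finite_cover_balls (half_pos hr)
  set P := convexHull ℝ (⋃ s ∈ I, C ∩ Metric.closedBall s (r / 2))
  have hPC : P ⊆ C := convexHull_min (iUnion₂_subset fun _ _ => inter_subset_left) hCc
  have hP : IsCompact P := hI.isCompact_convexHull_biUnion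
    (fun _ _ => hC.inter_right Metric.isClosed_closedBall)
    (fun _ _ => hCc.inter (convex_closedBall _ _))
  have hSP : S ⊆ P := fun s hs => subset_convexHull ℝ _ <| by
    obtain ⟨i, hi, hsi⟩ := mem_iUnion₂.1 (hSI hs)
    exact mem_iUnion₂.2 ⟨i, hi, hSC hs, Metric.ball_subset_closedBall hsi⟩
  intro heP
  replace heP := closedConvexHull_min hSP (convex_convexHull ℝ _) hP.isClosed heP
  -- `e` is extreme in `P ⊆ C`, hence lies in one of the small balls around points of `S`
  obtain ⟨i, hi, -, hei⟩ := mem_iUnion₂.1 <| extremePoints_convexHull_subset <|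
    inter_extremePoints_subset_extremePoints_of_subset hPC ⟨heP, he⟩
  refine hrS ?_ (hIS hi)
  rw [Metric.mem_ball, dist_comm]
  linarith [Metric.mem_closedBall.1 hei]

end Normed

section InnerProduct

variable {F : Type*} [NormedAddCommGroup F] [InnerProductSpace ℝ F]

theorem IsCompact.exists_norm_sub_lt_of_notMem {D : Set F} {e : F} (hD : IsCompact D)
    (hDc : Convex ℝ D) (he : e ∉ D) : ∃ z : F, ∀ q ∈ D, ‖q - z‖ < ‖e - z‖ := by
  rcases D.eq_empty_or_nonempty with rfl | hD₀
  · exact ⟨e, by simp⟩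
  have := hD₀.to_subtype
  obtain ⟨p, hpD, hpmin⟩ :=
    hD.exists_isMinOn hD₀ (continuous_const.sub continuous_id).norm.continuousOn
  obtain ⟨R, hR⟩ := hD.isBounded.exists_norm_le
  have hproj : ∀ q ∈ D, inner ℝ (e - p) (q - p) ≤ 0 :=
    (norm_eq_iInf_iff_real_inner_le_zero hDc hpD).1 <| le_antisymm
      (le_ciInf fun q => hpmin q.2) (ciInf_le ⟨0, by rintro _ ⟨q, rfl⟩; positivity⟩ (⟨p, hpD⟩ : D))
  set v := p - e with hv_def
  have hv : 0 < ‖v‖ := norm_pos_iff.2 (sub_ne_zero.2 fun h => he (h ▸ hpD))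
  set s := ((R + ‖e‖) ^ 2 + 1) / ‖v‖ ^ 2
  refine ⟨e + s • v, fun q hq => ?_⟩
  have hqv : ‖v‖ ^ 2 ≤ inner ℝ (q - e) v := by
    have h1 : inner ℝ (q - p) v = -inner ℝ (e - p) (q - p) := by
      rw [hv_def, ← neg_sub e p, inner_neg_right, real_inner_comm]
    have h2 : q - e = (q - p) + v := (sub_add_sub_cancel q p e).symm
    rw [h2, inner_add_left, real_inner_self_eq_norm_sq, h1]
    linarith [hproj q hq]
  have hqe : ‖q - e‖ ≤ R + ‖e‖ := (norm_sub_le q e).trans (by linarith [hR q hq])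
  have hsv : s * ‖v‖ ^ 2 = (R + ‖e‖) ^ 2 + 1 := div_mul_cancel₀ _ (by positivity)
  have hs : 0 ≤ s := by positivity
  have key : ‖q - (e + s • v)‖ ^ 2 < ‖e - (e + s • v)‖ ^ 2 := by
    rw [show q - (e + s • v) = (q - e) - s • v by abel, show e - (e + s • v) = -(s • v) by abel,
      norm_sub_sq_real, norm_neg, norm_smul, inner_smul_right, Real.norm_of_nonneg hs]
    nlinarith [mul_le_mul_of_nonneg_left hqv hs, pow_le_pow_left₀ (norm_nonneg _) hqe 2]
  exact lt_of_pow_lt_pow_left₀ 2 (norm_nonneg _) key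

theorem inner_lt_inner_of_norm_sub_le {z k q : F} (h : ‖q - z‖ ≤ ‖k - z‖) (hqk : q ≠ k) :
    inner ℝ q (k - z) < inner ℝ k (k - z) := by
  have hq : ‖q - z‖ ^ 2 = ‖q - k‖ ^ 2 + 2 * inner ℝ (q - k) (k - z) + ‖k - z‖ ^ 2 := by
    rw [← norm_add_sq_real, sub_add_sub_cancel]
  have hpos : 0 < ‖q - k‖ := norm_pos_iff.2 (sub_ne_zero.2 hqk)
  have hsq : ‖q - z‖ ^ 2 ≤ ‖k - z‖ ^ 2 := by gcongr
  rw [inner_sub_left] at hq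
  nlinarith

theorem exists_exposed_notMem_of_mem_extremePoints {C S : Set F} {e : F} (hC : IsCompact C)
    (hCc : Convex ℝ C) (hS : IsCompact S) (hSC : S ⊆ C) (he : e ∈ extremePoints ℝ C)
    (heS : e ∉ S) : ∃ k ∈ C, k ∉ S ∧ ∃ w : F, ∀ q ∈ C, q ≠ k → inner ℝ q w < inner ℝ k w := by
  have hDC : closedConvexHull ℝ S ⊆ C := closedConvexHull_min hSC hCc hC.isClosed
  obtain ⟨z, hz⟩ :=
    (hC.of_isClosed_subset isClosed_closedConvexHull hDC).exists_norm_sub_lt_of_notMem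
      convex_closedConvexHull (notMem_closedConvexHull_of_mem_extremePoints hC hCc hS hSC he heS)
  obtain ⟨k, hkC, hkmax⟩ :=
    hC.exists_isMaxOn ⟨e, he.1⟩ (continuous_id.sub continuous_const).norm.continuousOn
  refine ⟨k, hkC, fun hkS => ?_, k - z,
    fun q hq hqk => inner_lt_inner_of_norm_sub_le (hkmax hq) hqk⟩
  exact (hz k (subset_closedConvexHull hkS)).not_ge (hkmax he.1)

end InnerProduct

theorem lp.continuous_of_forall_abs_le {X ι : Type*} [TopologicalSpace X] {g : X → ℓ²(ι, ℝ)}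
    {b : ι → ℝ} (hb : Summable fun i => b i ^ 2) (hg : ∀ i, Continuous fun x => g x i)
    (hgb : ∀ x i, |g x i| ≤ b i) : Continuous g := by
  refine continuous_iff_continuousAt.2 fun x₀ => tendsto_iff_norm_sub_tendsto_zero.2 ?_
  have hsq : ∀ x, ‖g x - g x₀‖ ^ 2 = ∑' i, (g x i - g x₀ i) ^ 2 := fun x => by
    rw [← real_inner_self_eq_norm_sq, lp.inner_eq_tsum]
    simp [sq]
  have hcont : Continuous fun x => ∑' i, (g x i - g x₀ i) ^ 2 := by
    refine continuous_tsum (fun i => ((hg i).sub continuous_const).pow 2) (hb.mul_left 4)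
      fun i x => ?_
    rw [Real.norm_eq_abs, abs_sq, ← sq_abs]
    calc |g x i - g x₀ i| ^ 2 ≤ (b i + b i) ^ 2 := by
          gcongr
          exact (abs_sub _ _).trans (add_le_add (hgb x i) (hgb x₀ i))
      _ = 4 * b i ^ 2 := by ring
  have h0 : Tendsto (fun x => ‖g x - g x₀‖ ^ 2) (𝓝 x₀) (𝓝 0) := by
    simpa [hsq] using hcont.tendsto x₀
  simpa [Real.sqrt_sq (norm_nonneg _)] using h0.sqrt

theorem exists_seq_separating_of_continuous {X Y ι : Type*} [TopologicalSpace X]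
    [SecondCountableTopology X] [TopologicalSpace Y] [T2Space Y] [Nonempty ι] (φ : ι → X → Y)
    (hφ : ∀ i, Continuous (φ i)) (hsep : ∀ p q, (∀ i, φ i p = φ i q) → p = q) :
    ∃ f : ℕ → ι, ∀ p q, (∀ n, φ (f n) p = φ (f n) q) → p = q := by
  obtain ⟨T, hTc, hT⟩ := TopologicalSpace.isOpen_iUnion_countable
    (fun i => {pq : X × X | φ i pq.1 ≠ φ i pq.2})
    fun i => isOpen_ne_fun ((hφ i).comp continuous_fst) ((hφ i).comp continuous_snd)
  obtain ⟨f, hf⟩ := (hTc.insert (Classical.arbitrary ι)).exists_eq_range (insert_nonempty _ _)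
  refine ⟨f, fun p q hpq => hsep p q fun i => by_contra fun hi => ?_⟩
  have hpq' : (p, q) ∈ ⋃ i ∈ T, {pq : X × X | φ i pq.1 ≠ φ i pq.2} := by
    rw [hT]
    exact mem_iUnion.2 ⟨i, hi⟩
  obtain ⟨j, hj, hjpq⟩ := mem_iUnion₂.1 hpq'
  obtain ⟨n, rfl⟩ : j ∈ range f := hf ▸ mem_insert_of_mem _ hj
  exact hjpq (hpq n)

namespace WeakDual

variable {E : Type*} [NormedAddCommGroup E] [NormedSpace ℝ E] {y : ℕ → E}

theorem memℓp_apply (q : WeakDual ℝ E) (hy : Memℓp y 1) : Memℓp (fun n => q (y n)) 2 :=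
  ((hy.norm.const_mul ‖toStrongDual q‖).mono fun n =>
    (toStrongDual q).le_opNorm (y n)).of_exponent_ge (by norm_num)

noncomputable def sampleL2 (y : ℕ → E) (hy : Memℓp y 1) : WeakDual ℝ E →ₗ[ℝ] ℓ²(ℕ, ℝ) where
  toFun q := ⟨fun n => q (y n), memℓp_apply q hy⟩
  map_add' _ _ := rfl
  map_smul' _ _ := rfl

@[simp]
theorem sampleL2_apply (hy : Memℓp y 1) (q : WeakDual ℝ E) (n : ℕ) :
    sampleL2 y hy q n = q (y n) := rfl

theorem exists_apply_eq_inner_sampleL2 [CompleteSpace E] (hy : Memℓp y 1) (w : ℓ²(ℕ, ℝ)) :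
    ∃ x : E, ∀ q : WeakDual ℝ E, q x = inner ℝ (sampleL2 y hy q) w := by
  have hsum : Summable fun n => w n • y n :=
    ((hy.norm.const_mul ‖w‖).mono fun n => by
      rw [norm_smul]
      exact mul_le_mul_of_nonneg_right (lp.norm_apply_le_norm two_ne_zero w n)
        (norm_nonneg _)).summable_of_one
  refine ⟨∑' n, w n • y n, fun q => ?_⟩
  rw [← coe_toStrongDual, (toStrongDual q).map_tsum hsum, lp.inner_eq_tsum]
  simp

theorem exists_seq_separating_of_isCompact {K : Set (WeakDual ℝ E)} (hK : IsCompact K)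
    [SecondCountableTopology K] :
    ∃ y : ℕ → E, (∀ n, ‖y n‖ ≤ (1 / 2) ^ n) ∧ (∀ q ∈ K, ∀ n, |q (y n)| ≤ (1 / 2) ^ n) ∧
      ∀ p ∈ K, ∀ q ∈ K, (∀ n, p (y n) = q (y n)) → p = q := by
  obtain ⟨f, hf⟩ := exists_seq_separating_of_continuous (X := K) (fun x q => q.1 x)
    (fun x => (eval_continuous x).comp continuous_subtype_val)
    fun p q h => Subtype.ext (DFunLike.ext _ _ h)
  have hM : ∀ n, ∃ M > 0, ‖f n‖ ≤ M ∧ ∀ q ∈ K, |q (f n)| ≤ M := fun n => by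
    obtain ⟨C, hC⟩ := hK.exists_bound_of_continuousOn (eval_continuous (f n)).continuousOn
    refine ⟨max C ‖f n‖ + 1, by positivity, by linarith [le_max_right C ‖f n‖],
      fun q hq => ?_⟩
    linarith [le_max_left C ‖f n‖, hC q hq, Real.norm_eq_abs (q (f n))]
  choose M hM0 hMf hMK using hM
  have hc : ∀ n, 0 < (1 / 2 : ℝ) ^ n / M n := fun n => div_pos (by positivity) (hM0 n)
  have hscale : ∀ n {t : ℝ}, t ≤ M n → (1 / 2) ^ n / M n * t ≤ (1 / 2) ^ n := fun n t ht =>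
    (mul_le_mul_of_nonneg_left ht (hc n).le).trans (div_mul_cancel₀ _ (hM0 n).ne').le
  refine ⟨fun n => ((1 / 2) ^ n / M n) • f n, fun n => ?_, fun q hq n => ?_,
    fun p hp q hq h => congrArg Subtype.val (hf ⟨p, hp⟩ ⟨q, hq⟩ fun n => ?_)⟩
  · rw [norm_smul, Real.norm_of_nonneg (hc n).le]
    exact hscale n (hMf n)
  · rw [map_smul, smul_eq_mul, abs_mul, abs_of_pos (hc n)]
    exact hscale n (hMK n q hq)
  · have hn := h n
    rw [map_smul, map_smul, smul_eq_mul, smul_eq_mul] at hn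
    exact mul_left_cancel₀ (hc n).ne' hn

theorem extremePoints_subset_closure_exposed [CompleteSpace E] {K : Set (WeakDual ℝ E)}
    (hconv : Convex ℝ K) (hcomp : IsCompact K) [SecondCountableTopology K] :
    extremePoints ℝ K ⊆ closure {p ∈ K | ∃ x : E, ∀ q ∈ K, q ≠ p → q x < p x} := by
  obtain ⟨y, hy, hyK, hsep⟩ := exists_seq_separating_of_isCompact hcomp
  have hy1 : Memℓp y 1 := (memℓp_gen (by simpa using summable_geometric_two)).mono hy
  set T := sampleL2 y hy1
  have hsq : Summable fun n : ℕ => ((1 / 2 : ℝ) ^ n) ^ 2 :=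
    (summable_geometric_of_lt_one (r := (1 / 2 : ℝ) ^ 2) (by norm_num) (by norm_num)).congr
      fun n => by rw [← pow_mul, ← pow_mul, mul_comm]
  have hT : ContinuousOn T K := continuousOn_iff_continuous_domRestrict.2 <|
    lp.continuous_of_forall_abs_le hsq
      (fun n => (eval_continuous (y n)).comp continuous_subtype_val) fun q n => hyK q q.2 n
  have hTinj : InjOn T K := fun p hp q hq hpq =>
    hsep p hp q hq fun n => congrArg (fun v : ℓ²(ℕ, ℝ) => v n) hpq
  intro e he
  refine mem_closure_iff.2 fun o ho heo => ?_
  obtain ⟨_, ⟨k, hkK, rfl⟩, hko, w, hw⟩ := exists_exposed_notMem_of_mem_extremePoints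
    (hcomp.image_of_continuousOn hT) (hconv.linear_image T)
    ((hcomp.diff ho).image_of_continuousOn (hT.mono sdiff_subset)) (image_mono sdiff_subset)
    (mem_extremePoints_image_of_injOn hconv T hTinj he)
    fun ⟨q, hq, hTq⟩ => hq.2 (hTinj hq.1 he.1 hTq ▸ heo)
  obtain ⟨x, hx⟩ := exists_apply_eq_inner_sampleL2 hy1 w
  refine ⟨k, by_contra fun hk => hko ⟨k, ⟨hkK, hk⟩, rfl⟩, hkK, x, fun q hq hqk => ?_⟩
  rw [hx, hx]
  exact hw _ (mem_image_of_mem T hq) (hTinj.ne hq hkK hqk)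

end WeakDual

/-- Let `E` be a real Banach space and `K` a convex, weak* compact, weak* metrizable subset
of `E*`. Then the weak* exposed points of `K` are weak* dense in its affine exposed points,
which are weak* dense in its extreme points. -/
theorem stmt_12 {E : Type*} [NormedAddCommGroup E] [NormedSpace ℝ E] [CompleteSpace E]
    (K : Set (WeakDual ℝ E)) (hconv : Convex ℝ K) (hcomp : IsCompact K)
    (hmetr : TopologicalSpace.MetrizableSpace K)
    (wExp AExp : Set (WeakDual ℝ E))
    (hwExp : wExp = {p ∈ K | ∃ x : E, ∀ q ∈ K, q ≠ p → q x < p x})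
    (hAExp : AExp = {p : WeakDual ℝ E | ∃ hp : p ∈ K, ∃ τ : K → ℝ, Continuous τ ∧
      (∀ (a b : WeakDual ℝ E) (ha : a ∈ K) (hb : b ∈ K) (l : ℝ), 0 ≤ l → l ≤ 1 →
        ∀ hm : l • a + (1 - l) • b ∈ K,
          τ ⟨l • a + (1 - l) • b, hm⟩ = l * τ ⟨a, ha⟩ + (1 - l) * τ ⟨b, hb⟩) ∧
      (∀ q : WeakDual ℝ E, ∀ hq : q ∈ K, q ≠ p → τ ⟨q, hq⟩ < τ ⟨p, hp⟩)}) :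
    AExp ⊆ closure wExp ∧ Set.extremePoints ℝ K ⊆ closure AExp := by
  have : CompactSpace K := isCompact_iff_compactSpace.mp hcomp
  have hExt : Set.extremePoints ℝ K ⊆ closure wExp :=
    hwExp ▸ WeakDual.extremePoints_subset_closure_exposed hconv hcomp
  have hwA : wExp ⊆ AExp := by
    rw [hwExp, hAExp]
    rintro p ⟨hp, x, hx⟩
    exact ⟨hp, fun q => q.1 x, (WeakDual.eval_continuous x).comp continuous_subtype_val,
      fun _ _ _ _ _ _ _ _ => rfl, hx⟩
  have hAE : AExp ⊆ Set.extremePoints ℝ K := by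
    rw [hAExp]
    rintro p ⟨hp, τ, -, hτ, hmax⟩
    exact mem_extremePoints_of_affine_of_forall_lt hp τ hτ hmax
  exact ⟨hAE.trans hExt, hExt.trans (closure_mono hwA)⟩
end
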